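/- arXiv:0810.5685 — 4 statements merged into one kernel-verified Lean document; each statement's English description precedes it below -/
import Mathlib

section
/- Let p be a prime, α ∈ ℤ/pℤ, t a natural number, e_1 < e_2 < ... < e_t positive integers, and c_0, c_1, ..., c_t ∈ ℤ/pℤ. Let f = c_0 + Σ_{i=1}^t c_i (x − α)^{e_i} in (ℤ/pℤ)[x]. Then the remainder of f upon division by x^p − x equals c_0 + Σ_{i=1}^t c_i (x − α)^{e_i remo (p−1)}. -/
open Polynomial

/-- `a remo m`: the unique integer in `{1, …, m}` congruent to `a` modulo `m`
(for positive `a`). -/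
def remo (a m : ℕ) : ℕ := if m ∣ a then m else a % m

lemma remo_pos (a m : ℕ) (hm : 0 < m) : 0 < remo a m := by
  unfold remo; split
  · exact hm
  · rename_i hd
    exact Nat.pos_of_ne_zero fun h => hd (Nat.dvd_of_mod_eq_zero h)

lemma remo_le (a m : ℕ) (hm : 0 < m) : remo a m ≤ m := by
  unfold remo; split
  · exact le_rfl
  · exact le_of_lt (Nat.mod_lt _ hm)

lemma remo_le_self (a m : ℕ) (ha : 0 < a) : remo a m ≤ a := by
  unfold remo; split
  · exact Nat.le_of_dvd ha ‹_›
  · exact Nat.mod_le _ _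

lemma remo_dvd_sub (a m : ℕ) : m ∣ a - remo a m := by
  unfold remo; split
  · exact Nat.dvd_sub ‹_› dvd_rfl
  · simpa using Nat.dvd_sub_mod a

lemma key_dvd {p : ℕ} (hp : p.Prime) (α : ZMod p) (e : ℕ) (he : 0 < e) :
    (X ^ p - X : (ZMod p)[X]) ∣ (X - C α) ^ e - (X - C α) ^ (remo e (p - 1)) := by
  haveI := Fact.mk hp
  have hp1 : 0 < p - 1 := by have := hp.two_le; omega
  set Y : (ZMod p)[X] := X - C α with hY
  have hYp : Y ^ p - Y = X ^ p - X := by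
    have : Y ^ p = X ^ p - C α := by
      rw [hY, sub_pow_char, ← C_pow, ZMod.pow_card]
    rw [this, hY]; ring
  rw [← hYp]
  set r := remo e (p - 1) with hr
  have hrpos : 0 < r := remo_pos e (p - 1) hp1
  have hrle : r ≤ e := remo_le_self e (p - 1) he
  obtain ⟨k, hk⟩ := remo_dvd_sub e (p - 1)
  have he' : e = r + (p - 1) * k := by omega
  have hfac : Y ^ e - Y ^ r = Y ^ r * ((Y ^ (p - 1)) ^ k - 1) := by
    rw [he', pow_add, pow_mul]; ring
  rw [hfac]
  have h1 : Y ^ (p - 1) - 1 ∣ (Y ^ (p - 1)) ^ k - 1 := by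
    simpa using sub_dvd_pow_sub_pow (Y ^ (p - 1)) 1 k
  have h2 : Y ^ p - Y = Y * (Y ^ (p - 1) - 1) := by
    rw [mul_sub, mul_one, ← pow_succ']
    congr 2
    omega
  rw [h2]
  exact mul_dvd_mul (dvd_pow_self Y hrpos.ne') h1

/-- The remainder of `c₀ + Σ cᵢ (x - α)^{eᵢ}` upon division by `x^p - x`
equals `c₀ + Σ cᵢ (x - α)^{eᵢ remo (p-1)}`. -/
theorem modByMonic_Xp_sub_X_shifted_sparse (p : ℕ) (hp : p.Prime) (α : ZMod p)
    (t : ℕ) (e : Fin t → ℕ) (he : StrictMono e) (hepos : ∀ i, 0 < e i)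
    (c₀ : ZMod p) (c : Fin t → ZMod p) :
    (C c₀ + ∑ i, C (c i) * (X - C α) ^ e i) %ₘ (X ^ p - X)
      = C c₀ + ∑ i, C (c i) * (X - C α) ^ (remo (e i) (p - 1)) := by
  haveI := Fact.mk hp
  have hp2 := hp.two_le
  have hmonic : (X ^ p - X : (ZMod p)[X]).Monic :=
    monic_X_pow_sub (by simpa [degree_X] using (by exact_mod_cast hp.one_lt : (1 : WithBot ℕ) < p))
  have hdeg : ((X : (ZMod p)[X]) ^ p - X).degree = (p : WithBot ℕ) := by
    rw [degree_sub_eq_left_of_degree_lt]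
    · exact degree_X_pow p
    · rw [degree_X_pow, degree_X]
      exact_mod_cast hp.one_lt
  set g : (ZMod p)[X] := C c₀ + ∑ i, C (c i) * (X - C α) ^ (remo (e i) (p - 1)) with hg
  have hdvd : (X ^ p - X : (ZMod p)[X]) ∣
      (C c₀ + ∑ i, C (c i) * (X - C α) ^ e i) - g := by
    rw [hg, add_sub_add_left_eq_sub, ← Finset.sum_sub_distrib]
    apply Finset.dvd_sum
    intro i _
    rw [← mul_sub]
    exact Dvd.dvd.mul_left (key_dvd hp α (e i) (hepos i)) _
  have hgdeg : g.degree < (p : WithBot ℕ) := by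
    rw [hg]
    apply lt_of_le_of_lt (degree_add_le _ _)
    apply max_lt
    · exact lt_of_le_of_lt (degree_C_le) (by exact_mod_cast hp.pos)
    · apply lt_of_le_of_lt (degree_sum_le _ _)
      apply Finset.sup_lt_iff (WithBot.bot_lt_coe p) |>.mpr
      intro i _
      apply lt_of_le_of_lt (degree_mul_le _ _)
      have h1 : (C (c i)).degree ≤ 0 := degree_C_le
      have h2 : ((X - C α : (ZMod p)[X]) ^ (remo (e i) (p - 1))).degree
          ≤ (remo (e i) (p - 1) : WithBot ℕ) := by
        apply le_trans (degree_pow_le _ _)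
        have := degree_X_sub_C α
        simp [this]
      have h3 : remo (e i) (p - 1) < p := by
        have := remo_le (e i) (p - 1) (by omega)
        omega
      calc (C (c i)).degree + ((X - C α : (ZMod p)[X]) ^ (remo (e i) (p - 1))).degree
          ≤ 0 + (remo (e i) (p - 1) : WithBot ℕ) := add_le_add h1 h2
        _ = (remo (e i) (p - 1) : WithBot ℕ) := zero_add _
        _ < p := by exact_mod_cast h3
  rw [modByMonic_eq_of_dvd_sub hmonic hdvd,
    (modByMonic_eq_self_iff hmonic).mpr (hdeg ▸ hgdeg)]
end

section
/- Let t, B_T, B_H, B_N be positive integers with t ≤ B_T, let c_t be a nonzero rational number whose numerator has absolute value at most 2^{B_H} and whose denominator is at most 2^{B_H}, and let 1 ≤ e_1 < e_2 < ... < e_t be integers with e_t ≤ 2^{B_N} and e_t > 2B_T. Then there exist positive integers C_1 and C_2 with C_1 ≤ 2^{2B_H} and C_2 ≤ 2^{B_N(3B_T−1)} such that for every prime p with p ∤ C_1 and (p−1) ∤ C_2, the following all hold: the numerator of c_t is nonzero modulo p, the denominator of c_t is nonzero modulo p, e_t ≢ e_i (mod p−1) for all 1 ≤ i < t, and e_t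 ≢ i (mod p−1) for all integers 1 ≤ i ≤ 2B_T. -/
/-- There exist `C₁ ≤ 2^{2 B_H}` and `C₂ ≤ 2^{B_N (3 B_T - 1)}` such that every
prime `p` with `p ∤ C₁` and `(p-1) ∤ C₂` satisfies the sufficient conditions
guaranteeing `deg f⁽ᵖ⁾ > 2 B_T`. -/
theorem exists_C1_C2_sparsest_shift (t B_T B_H B_N : ℕ)
    (htpos : 0 < t) (htBT : t ≤ B_T) (hBT : 0 < B_T) (hBH : 0 < B_H)
    (hBN : 0 < B_N)
    (c : ℚ) (hc : c ≠ 0) (hnum : c.num.natAbs ≤ 2 ^ B_H)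
    (hden : c.den ≤ 2 ^ B_H)
    (e : Fin t → ℕ) (he : StrictMono e) (hepos : ∀ i, 1 ≤ e i)
    (heN : e ⟨t - 1, by omega⟩ ≤ 2 ^ B_N)
    (hedeg : 2 * B_T < e ⟨t - 1, by omega⟩) :
    ∃ C₁ C₂ : ℕ, 0 < C₁ ∧ 0 < C₂ ∧
      C₁ ≤ 2 ^ (2 * B_H) ∧ C₂ ≤ 2 ^ (B_N * (3 * B_T - 1)) ∧
      ∀ p : ℕ, p.Prime → ¬ (p ∣ C₁) → ¬ ((p - 1) ∣ C₂) →
        ((c.num : ZMod p) ≠ 0 ∧ ((c.den : ℕ) : ZMod p) ≠ 0 ∧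
         (∀ i : Fin t, (i : ℕ) < t - 1 →
            ¬ (e ⟨t - 1, by omega⟩ ≡ e i [MOD p - 1])) ∧
         (∀ i : ℕ, 1 ≤ i → i ≤ 2 * B_T →
            ¬ (e ⟨t - 1, by omega⟩ ≡ i [MOD p - 1]))) := by
  have ht1 : t - 1 < t := by omega
  set m := e ⟨t - 1, ht1⟩ with hm
  set e' : ℕ → ℕ := fun i => if h : i < t then e ⟨i, h⟩ else 0 with he'
  have he'lt : ∀ i < t - 1, e' i < m := by
    intro i hi
    have hit : i < t := by omega
    have : e' i = e ⟨i, hit⟩ := by simp [he', hit]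
    rw [this]
    exact he (by simp [Fin.lt_def]; omega)
  refine ⟨c.num.natAbs * c.den,
    (∏ i ∈ Finset.range (t - 1), (m - e' i)) *
      (∏ i ∈ Finset.Icc 1 (2 * B_T), (m - i)), ?_, ?_, ?_, ?_, ?_⟩
  · exact Nat.mul_pos (Int.natAbs_pos.mpr (Rat.num_ne_zero.mpr hc)) c.pos
  · apply Nat.mul_pos <;> apply Finset.prod_pos
    · intro i hi
      have := he'lt i (Finset.mem_range.mp hi)
      omega
    · intro i hi
      have := Finset.mem_Icc.mp hi
      omega
  · calc c.num.natAbs * c.den ≤ 2 ^ B_H * 2 ^ B_H := Nat.mul_le_mul hnum hden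
      _ = 2 ^ (2 * B_H) := by rw [← pow_add]; ring_nf
  · have h1 : (∏ i ∈ Finset.range (t - 1), (m - e' i)) ≤ (2 ^ B_N) ^ (t - 1) := by
      calc (∏ i ∈ Finset.range (t - 1), (m - e' i))
          ≤ (2 ^ B_N) ^ (Finset.range (t - 1)).card :=
            Finset.prod_le_pow_card _ _ _ (fun i _ => le_trans (Nat.sub_le _ _) heN)
        _ = (2 ^ B_N) ^ (t - 1) := by rw [Finset.card_range]
    have h2 : (∏ i ∈ Finset.Icc 1 (2 * B_T), (m - i)) ≤ (2 ^ B_N) ^ (2 * B_T) := by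
      calc (∏ i ∈ Finset.Icc 1 (2 * B_T), (m - i))
          ≤ (2 ^ B_N) ^ (Finset.Icc 1 (2 * B_T)).card :=
            Finset.prod_le_pow_card _ _ _ (fun i _ => le_trans (Nat.sub_le _ _) heN)
        _ = (2 ^ B_N) ^ (2 * B_T) := by simp
    calc _ ≤ (2 ^ B_N) ^ (t - 1) * (2 ^ B_N) ^ (2 * B_T) := Nat.mul_le_mul h1 h2
      _ = 2 ^ (B_N * (t - 1 + 2 * B_T)) := by rw [← pow_add, ← pow_mul]
      _ ≤ 2 ^ (B_N * (3 * B_T - 1)) := by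
          apply Nat.pow_le_pow_right (by norm_num)
          exact Nat.mul_le_mul_left _ (by omega)
  · intro p hp hC1 hC2
    refine ⟨?_, ?_, ?_, ?_⟩
    · intro h0
      have hd : (p : ℤ) ∣ c.num := (ZMod.intCast_zmod_eq_zero_iff_dvd _ p).mp h0
      have : p ∣ c.num.natAbs := Int.natCast_dvd.mp hd
      exact hC1 (this.mul_right _)
    · intro h0
      have : p ∣ c.den := (ZMod.natCast_eq_zero_iff _ p).mp h0
      exact hC1 (this.mul_left _)
    · intro i hi hcong
      have hit : (i : ℕ) < t := i.isLt
      have hlt : e i < m := he (by simp [Fin.lt_def]; omega)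
      have hd : (p - 1) ∣ m - e i :=
        (Nat.modEq_iff_dvd' hlt.le).mp hcong.symm
      have he'eq : e' (i : ℕ) = e i := by simp [he', hit]
      have hmem : (i : ℕ) ∈ Finset.range (t - 1) := Finset.mem_range.mpr hi
      have : (m - e i) ∣ (∏ j ∈ Finset.range (t - 1), (m - e' j)) := by
        rw [← he'eq]; exact Finset.dvd_prod_of_mem _ hmem
      exact hC2 (hd.trans (this.mul_right _))
    · intro i h1i hi2 hcong
      have hlt : i < m := by omega
      have hd : (p - 1) ∣ m - i := (Nat.modEq_iff_dvd' hlt.le).mp hcong.symm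
      have hmem : i ∈ Finset.Icc 1 (2 * B_T) := Finset.mem_Icc.mpr ⟨h1i, hi2⟩
      have : (m - i) ∣ (∏ j ∈ Finset.Icc 1 (2 * B_T), (m - j)) :=
        Finset.dvd_prod_of_mem _ hmem
      exact hC2 (hd.trans (this.mul_left _))
end

section
/- Let t, B_T, B_H, B_N be positive integers with t ≤ B_T, let c_1, ..., c_t be nonzero rational numbers, each with numerator of absolute value at most 2^{B_H} and denominator at most 2^{B_H}, and let 1 ≤ e_1 < e_2 < ... < e_t be integers with e_t ≤ 2^{B_N}. Then there exist positive integers C_1 and C_2 with C_1 ≤ 2^{2B_H·B_T} and C_2^2 ≤ 2^{B_N·B_T·(B_T−1)} such that for every prime p with p ∤ C_1 and (p−1) ∤ C_2, the polynomial Σ_{i=1}^t (a_i · b_i^{−1}) x^{e_i remo (p−1)} in (ℤ/pℤ)[x] — where a_i and b_i are the images in ℤ/pℤ of the numerator and denominator of c_i — has exactly t nonzero terms, i.e., its support has cardinality t. -/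
open Polynomial

lemma remo_mod (a m : ℕ) (hm : 0 < m) : remo a m % m = a % m := by
  unfold remo
  split
  · rename_i h
    rw [Nat.mod_self, Nat.mod_eq_zero_of_dvd h]
  · exact Nat.mod_mod_of_dvd a dvd_rfl

/-- There exist `C₁ ≤ 2^{2 B_H B_T}` and `C₂` with `C₂² ≤ 2^{B_N B_T (B_T - 1)}`
such that for every prime `p` with `p ∤ C₁` and `(p-1) ∤ C₂`, the reduction
`f⁽ᵖ⁾ = Σ (aᵢ bᵢ⁻¹) x^{eᵢ remo (p-1)}` has exactly `t` nonzero terms. -/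
theorem exists_C1_C2_interpolation (t B_T B_H B_N : ℕ)
    (htpos : 0 < t) (htBT : t ≤ B_T) (hBT : 0 < B_T) (hBH : 0 < B_H)
    (hBN : 0 < B_N)
    (c : Fin t → ℚ) (hc : ∀ i, c i ≠ 0)
    (hnum : ∀ i, (c i).num.natAbs ≤ 2 ^ B_H)
    (hden : ∀ i, (c i).den ≤ 2 ^ B_H)
    (e : Fin t → ℕ) (he : StrictMono e) (hepos : ∀ i, 1 ≤ e i)
    (heN : e ⟨t - 1, by omega⟩ ≤ 2 ^ B_N) :
    ∃ C₁ C₂ : ℕ, 0 < C₁ ∧ 0 < C₂ ∧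
      C₁ ≤ 2 ^ (2 * B_H * B_T) ∧ C₂ ^ 2 ≤ 2 ^ (B_N * B_T * (B_T - 1)) ∧
      ∀ p : ℕ, p.Prime → ¬ (p ∣ C₁) → ¬ ((p - 1) ∣ C₂) →
        (∑ i, C (((c i).num : ZMod p) * (((c i).den : ℕ) : ZMod p)⁻¹)
            * X ^ (remo (e i) (p - 1))).support.card = t := by
  refine ⟨∏ i : Fin t, ((c i).num.natAbs * (c i).den),
    ∏ j : Fin t, ∏ i ∈ Finset.Iio j, (e j - e i), ?_, ?_, ?_, ?_, ?_⟩
  · exact Finset.prod_pos fun i _ => Nat.mul_pos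
      (Int.natAbs_pos.2 (Rat.num_ne_zero.2 (hc i))) (c i).pos
  · refine Finset.prod_pos fun j _ => Finset.prod_pos fun i hi => ?_
    have := he (Finset.mem_Iio.1 hi)
    omega
  · calc ∏ i : Fin t, ((c i).num.natAbs * (c i).den)
        ≤ ∏ _i : Fin t, (2 ^ B_H * 2 ^ B_H) :=
          Finset.prod_le_prod (fun _ _ => Nat.zero_le _)
            (fun i _ => Nat.mul_le_mul (hnum i) (hden i))
      _ = 2 ^ (2 * B_H * t) := by
          rw [Finset.prod_const, Finset.card_univ, Fintype.card_fin, ← pow_add, ← pow_mul]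
          ring_nf
      _ ≤ 2 ^ (2 * B_H * B_T) := Nat.pow_le_pow_right (by norm_num)
          (Nat.mul_le_mul_left _ htBT)
  · have hb : ∀ j : Fin t, ∀ i ∈ Finset.Iio j, e j - e i ≤ 2 ^ B_N := by
      intro j i _
      have : e j ≤ e ⟨t - 1, by omega⟩ := he.monotone (by
        have := j.isLt; exact Fin.mk_le_mk.2 (by omega) |>.trans_eq rfl)
      omega
    have hle : (∏ j : Fin t, ∏ i ∈ Finset.Iio j, (e j - e i))
        ≤ 2 ^ (B_N * ∑ j : Fin t, (j : ℕ)) := by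
      calc ∏ j : Fin t, ∏ i ∈ Finset.Iio j, (e j - e i)
          ≤ ∏ j : Fin t, ∏ _i ∈ Finset.Iio j, 2 ^ B_N :=
            Finset.prod_le_prod (fun _ _ => Nat.zero_le _)
              (fun j _ => Finset.prod_le_prod (fun _ _ => Nat.zero_le _) (hb j))
        _ = ∏ j : Fin t, 2 ^ (B_N * (j : ℕ)) := by
            simp [Finset.prod_const, Fin.card_Iio, pow_mul]
        _ = 2 ^ (B_N * ∑ j : Fin t, (j : ℕ)) := by
            rw [Finset.prod_pow_eq_pow_sum, ← Finset.mul_sum]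
    have hsum : 2 * ∑ j : Fin t, (j : ℕ) = t * (t - 1) := by
      rw [Fin.sum_univ_eq_sum_range (fun i => i) t]
      have := Finset.sum_range_id_mul_two t
      omega
    calc (∏ j : Fin t, ∏ i ∈ Finset.Iio j, (e j - e i)) ^ 2
        ≤ (2 ^ (B_N * ∑ j : Fin t, (j : ℕ))) ^ 2 := Nat.pow_le_pow_left hle 2
      _ = 2 ^ (B_N * (t * (t - 1))) := by rw [← pow_mul, ← hsum]; ring_nf
      _ ≤ 2 ^ (B_N * B_T * (B_T - 1)) := Nat.pow_le_pow_right (by norm_num) (by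
          have : t * (t - 1) ≤ B_T * (B_T - 1) :=
            Nat.mul_le_mul htBT (by omega)
          calc B_N * (t * (t - 1)) ≤ B_N * (B_T * (B_T - 1)) :=
                Nat.mul_le_mul_left _ this
            _ = B_N * B_T * (B_T - 1) := by ring)
  · intro p hp hp1 hp2
    haveI : Fact p.Prime := ⟨hp⟩
    have hp2' : p ≠ 2 := by rintro rfl; exact hp2 (one_dvd _)
    have hp1' : 1 < p - 1 := by
      have h2 := hp.two_le
      have h3 : p ≠ 3 → 2 < p → 3 < p := by omega
      rcases Nat.lt_or_ge p 3 with h | h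
      · omega
      · omega
    set a : Fin t → ZMod p :=
      fun i => ((c i).num : ZMod p) * (((c i).den : ℕ) : ZMod p)⁻¹ with ha_def
    set d : Fin t → ℕ := fun i => remo (e i) (p - 1) with hd_def
    have hfac : ∀ i : Fin t, ((c i).num.natAbs * (c i).den) ∣
        ∏ i : Fin t, ((c i).num.natAbs * (c i).den) :=
      fun i => Finset.dvd_prod_of_mem _ (Finset.mem_univ i)
    have ha : ∀ i, a i ≠ 0 := by
      intro i
      have h1 : ¬ p ∣ (c i).num.natAbs := fun h =>
        hp1 (h.trans ((Dvd.intro _ rfl).trans (hfac i)))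
      have h2 : ¬ p ∣ (c i).den := fun h =>
        hp1 (h.trans ((Dvd.intro_left _ rfl).trans (hfac i)))
      have hn : ((c i).num : ZMod p) ≠ 0 := by
        rw [Ne, ZMod.intCast_zmod_eq_zero_iff_dvd, Int.natCast_dvd]
        exact h1
      have hd0 : (((c i).den : ℕ) : ZMod p) ≠ 0 := by
        rw [Ne, ZMod.natCast_eq_zero_iff]
        exact h2
      exact mul_ne_zero hn (inv_ne_zero hd0)
    have hdinj : Function.Injective d := by
      have key : ∀ i j : Fin t, i < j → d i ≠ d j := by
        intro i j hij hEq
        have hmod : e i % (p - 1) = e j % (p - 1) := by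
          have h1 := remo_mod (e i) (p - 1) (by omega)
          have h2 := remo_mod (e j) (p - 1) (by omega)
          rw [hd_def] at hEq
          simp only at hEq
          rw [← h1, ← h2, hEq]
        have hdvd : (p - 1) ∣ (e j - e i) :=
          (Nat.modEq_iff_dvd' (he hij).le).1 hmod
        have h1 : (e j - e i) ∣ ∏ i' ∈ Finset.Iio j, (e j - e i') :=
          Finset.dvd_prod_of_mem (fun i' => e j - e i') (Finset.mem_Iio.2 hij)
        have h2 : (∏ i' ∈ Finset.Iio j, (e j - e i')) ∣
            ∏ j' : Fin t, ∏ i' ∈ Finset.Iio j', (e j' - e i') :=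
          Finset.dvd_prod_of_mem (fun j' => ∏ i' ∈ Finset.Iio j', (e j' - e i'))
            (Finset.mem_univ j)
        exact hp2 (hdvd.trans (h1.trans h2))
      intro i j hEq
      rcases lt_trichotomy i j with h | h | h
      · exact absurd hEq (key i j h)
      · exact h
      · exact absurd hEq.symm (key j i h)
    have hP : (∑ i, C (a i) * X ^ (d i)) = ∑ i, monomial (d i) (a i) := by
      simp [C_mul_X_pow_eq_monomial]
    rw [hP]
    have hsupp : (∑ i, monomial (d i) (a i)).support = Finset.image d Finset.univ := by
      ext n
      simp only [Polynomial.mem_support_iff, Polynomial.finset_sum_coeff,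
        Polynomial.coeff_monomial, Finset.mem_image, Finset.mem_univ, true_and]
      constructor
      · intro h
        by_contra hn
        push_neg at hn
        exact h (Finset.sum_eq_zero fun i _ => if_neg (hn i))
      · rintro ⟨j, rfl⟩
        rw [Finset.sum_eq_single j (fun i _ hij => if_neg fun h => hij (hdinj h))
          (fun h => absurd (Finset.mem_univ j) h), if_pos rfl]
        exact ha j
    rw [hsupp, Finset.card_image_of_injective _ hdinj, Finset.card_univ, Fintype.card_fin]
end

section
/- Let p be a prime, α ∈ ℤ/pℤ, t a natural number, e_1 < e_2 < ... < e_t positive integers, and c_0, c_1, ..., c_t ∈ ℤ/pℤ. Let f = c_0 + Σ_{i=1}^t c_i (x − α)^{e_i} in (ℤ/pℤ)[x], and let g be the remainder of f upon division by x^p − x. Then the polynomial g(x + α) has at most t nonzero non-constant terms; that is, α is a k-sparse shift of g for some k ≤ t. -/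
/-! Since `α ^ p = α`, the substitution `x ↦ x + α` fixes `x ^ p - x`, so it commutes with
reduction modulo `x ^ p - x`. Hence `g(x + α)` is the reduction of
`f(x + α) = c₀ + Σ cᵢ x ^ eᵢ`, and that reduction sends each monomial `x ^ e` to a single
monomial `x ^ r`. -/

open Polynomial

namespace Polynomial

section CommRing

variable {R : Type*} [CommRing R]

theorem taylor_modByMonic {q : R[X]} (hq : q.Monic) {a : R} (hqa : taylor a q = q) (f : R[X]) :
    taylor a (f %ₘ q) = taylor a f %ₘ q := by
  nontriviality R
  refine ((div_modByMonic_unique (taylor a (f /ₘ q)) _ hq ⟨?_, ?_⟩).2).symm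
  · conv_rhs => rw [← modByMonic_add_div f q]
    rw [map_add, taylor_mul, hqa]
  · rw [degree_taylor]
    exact degree_modByMonic_lt f hq

variable [Nontrivial R] {n : ℕ}

theorem degree_X_pow_sub_X (hn : 1 < n) : (X ^ n - X : R[X]).degree = n := by
  rw [degree_sub_eq_left_of_degree_lt, degree_X_pow]
  rw [degree_X, degree_X_pow]
  exact_mod_cast hn

theorem monic_X_pow_sub_X (hn : 1 < n) : (X ^ n - X : R[X]).Monic :=
  monic_X_pow_sub (by rw [degree_X]; exact_mod_cast hn)

theorem exists_X_pow_modByMonic_X_pow_sub_X (hn : 1 < n) (e : ℕ) :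
    ∃ r, (X ^ e : R[X]) %ₘ (X ^ n - X) = X ^ r := by
  induction e using Nat.strong_induction_on with
  | _ e ih =>
    by_cases he : e < n
    · refine ⟨e, (modByMonic_eq_self_iff (monic_X_pow_sub_X hn)).2 ?_⟩
      rw [degree_X_pow, degree_X_pow_sub_X hn]
      exact_mod_cast he
    · obtain ⟨k, rfl⟩ := Nat.exists_eq_add_of_le' (not_lt.1 he)
      obtain ⟨r, hr⟩ := ih (k + 1) (by omega)
      refine ⟨r, ?_⟩
      rw [← hr]
      refine modByMonic_eq_of_dvd_sub (monic_X_pow_sub_X hn) ⟨X ^ k, ?_⟩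
      ring

theorem exists_modByMonic_X_pow_sub_X_eq_sum {ι : Type*} (s : Finset ι) (hn : 1 < n)
    (c₀ : R) (c : ι → R) (e : ι → ℕ) :
    ∃ r : ι → ℕ, (C c₀ + ∑ i ∈ s, C (c i) * X ^ e i) %ₘ (X ^ n - X) =
      C c₀ + ∑ i ∈ s, C (c i) * X ^ r i := by
  choose r hr using fun i => exists_X_pow_modByMonic_X_pow_sub_X (R := R) hn (e i)
  refine ⟨r, ?_⟩
  have hC : C c₀ %ₘ (X ^ n - X) = C c₀ :=
    (modByMonic_eq_self_iff (monic_X_pow_sub_X hn)).2 <|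
      degree_C_le.trans_lt (by rw [degree_X_pow_sub_X hn]; exact_mod_cast zero_lt_one.trans hn)
  simp only [← modByMonicHom_apply, map_add, map_sum, ← smul_eq_C_mul, map_smul]
  simp only [modByMonicHom_apply, hC, hr]

end CommRing

theorem card_support_sum_C_mul_X_pow_sdiff_zero_le {R ι : Type*} [Semiring R] [Fintype ι]
    (c₀ : R) (c : ι → R) (r : ι → ℕ) :
    ((C c₀ + ∑ i, C (c i) * X ^ r i).support \ {0}).card ≤ Fintype.card ι := by
  classical
  have hsub : (C c₀ + ∑ i, C (c i) * X ^ r i).support \ {0} ⊆ Finset.univ.image r := by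
    intro n hn
    simp only [Finset.mem_sdiff, mem_support_iff, Finset.mem_singleton] at hn
    by_contra hmem
    apply hn.1
    simp only [coeff_add, coeff_C, if_neg hn.2, finsetSum_coeff, coeff_C_mul, coeff_X_pow,
      zero_add]
    refine Finset.sum_eq_zero fun i _ => ?_
    have hni : n ≠ r i := fun h => hmem (h ▸ Finset.mem_image_of_mem r (Finset.mem_univ i))
    rw [if_neg hni, mul_zero]
  exact (Finset.card_le_card hsub).trans Finset.card_image_le

theorem taylor_X_pow_card_sub_X {K : Type*} [Field K] [Fintype K] (a : K) :
    taylor a (X ^ Fintype.card K - X) = X ^ Fintype.card K - X := by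
  rw [map_sub, taylor_X_pow, taylor_X, ← FiniteField.expand_card]
  simp

end Polynomial

theorem modByMonic_Xp_sub_X_sparse_shift_general (p : ℕ) (hp : p.Prime) (α : ZMod p)
    (t : ℕ) (e : Fin t → ℕ)
    (c₀ : ZMod p) (c : Fin t → ZMod p) :
    ((((C c₀ + ∑ i, C (c i) * (X - C α) ^ e i) %ₘ (X ^ p - X)).comp
        (X + C α)).support \ {0}).card ≤ t := by
  have := Fact.mk hp
  have hq : taylor α (X ^ p - X) = X ^ p - X := by
    simpa only [ZMod.card] using taylor_X_pow_card_sub_X α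
  have hshift : taylor α (C c₀ + ∑ i, C (c i) * (X - C α) ^ e i) =
      C c₀ + ∑ i, C (c i) * X ^ e i := by
    simp [taylor_mul, taylor_pow, taylor_C, taylor_X]
  obtain ⟨r, hr⟩ := exists_modByMonic_X_pow_sub_X_eq_sum Finset.univ hp.one_lt c₀ c e
  rw [← taylor_apply, taylor_modByMonic (monic_X_pow_sub_X hp.one_lt) hq, hshift, hr]
  simpa using card_support_sum_C_mul_X_pow_sdiff_zero_le c₀ c r

/-- If `f = c₀ + Σ cᵢ (x - α)^{eᵢ}` and `g = f mod (x^p - x)`, then `g(x + α)`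
has at most `t` nonzero non-constant terms, i.e. `α` is a `k`-sparse shift of
`g` for some `k ≤ t`. -/
theorem modByMonic_Xp_sub_X_sparse_shift (p : ℕ) (hp : p.Prime) (α : ZMod p)
    (t : ℕ) (e : Fin t → ℕ) (he : StrictMono e) (hepos : ∀ i, 0 < e i)
    (c₀ : ZMod p) (c : Fin t → ZMod p) :
    ((((C c₀ + ∑ i, C (c i) * (X - C α) ^ e i) %ₘ (X ^ p - X)).comp
        (X + C α)).support \ {0}).card ≤ t :=
  modByMonic_Xp_sub_X_sparse_shift_general p hp α t e c₀ c
end
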